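/- Size-reduction formula for a simple component: let N = 2n with n ≥ 1 and let w₁,…,w_{2n} be nonzero complex numbers with q w_j/w_k ∉ {1,−1} for 1 ≤ j < k ≤ 2n. Then the component of the renormalised Bethe vector on the basis vector with n letters ⇑ followed by n letters ⇓ equals ⟨⇑…⇑⇓…⇓|Ψ̃(w₁,…,w_{2n})⟩ = ( ∏_{j=1}^{2n} ∏_{k=1}^{n} [q⁻¹ w_j/w_k] ) / ( ([q][q²])^n ∏_{1≤j<k≤2n} [q w_j/w_k] ) · ⟨∨| ℬ'(w₁) ℬ'(w₂) ⋯ ℬ'(w_{2n}) |∧'⟩, where ℬ'(z) := ℬ(z | w_{n+1},…,w_{2n}) is the ℬ-operator of the n-site monodromy matrix with inhomogeneities w_{n+1},…,w_{2n}, |∧'⟩ = |⇑⟩^{⊗n}, and ⟨∨|X|∧'⟩ denotes the matrix entry of the operator X on (ℂ³)^{⊗n} between the basis vectors |⇓⟩^{⊗n} (output) and |⇑⟩^{⊗n} (input). -/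

import Mathlib

open Matrix BigOperators Finset

noncomputable section

/-- `[z] = z - z⁻¹`. -/
def br (z : ℂ) : ℂ := z - z⁻¹

/-- R-matrix `R^{(1,2)}(z)` on ℂ²⊗ℂ³; basis `(ε, σ)` with ε ∈ {0=↑,1=↓}, σ ∈ {0=⇑,1=0,2=⇓}. -/
def R12 (q c z : ℂ) : Matrix (Fin 2 × Fin 3) (Fin 2 × Fin 3) ℂ :=
  Matrix.of fun p p' =>
    if p = (0,0) ∧ p' = (0,0) then br (q^2*z)
    else if p = (0,1) ∧ p' = (0,1) then br (q*z)
    else if p = (0,2) ∧ p' = (0,2) then br z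
    else if p = (1,0) ∧ p' = (1,0) then br z
    else if p = (1,1) ∧ p' = (1,1) then br (q*z)
    else if p = (1,2) ∧ p' = (1,2) then br (q^2*z)
    else if p = (0,1) ∧ p' = (1,0) then c
    else if p = (0,2) ∧ p' = (1,1) then c
    else if p = (1,0) ∧ p' = (0,1) then c
    else if p = (1,1) ∧ p' = (0,2) then c
    else 0

/-- `R^{(1,2)}` acting on the auxiliary ℂ² and the j-th site of `(ℂ³)^{⊗N}`. -/
def R12at (q c z : ℂ) {N : ℕ} (j : Fin N) :
    Matrix (Fin 2 × (Fin N → Fin 3)) (Fin 2 × (Fin N → Fin 3)) ℂ :=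
  Matrix.of fun p p' =>
    R12 q c z (p.1, p.2 j) (p'.1, p'.2 j) *
      if ∀ k, k ≠ j → p.2 k = p'.2 k then 1 else 0

/-- Monodromy matrix `𝒯_a(z) = R^{(1,2)}_{a,N}(q⁻¹z/w_N) ⋯ R^{(1,2)}_{a,1}(q⁻¹z/w₁)`. -/
def monodromy (q c : ℂ) {N : ℕ} (w : Fin N → ℂ) (z : ℂ) :
    Matrix (Fin 2 × (Fin N → Fin 3)) (Fin 2 × (Fin N → Fin 3)) ℂ :=
  (((List.finRange N).reverse).map fun j => R12at q c (q⁻¹ * z / w j) j).prod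

/-- The operator 𝒜(z): auxiliary block (↑,↑) of the monodromy matrix. -/
def Aop (q c : ℂ) {N : ℕ} (w : Fin N → ℂ) (z : ℂ) :
    Matrix (Fin N → Fin 3) (Fin N → Fin 3) ℂ :=
  Matrix.of fun σ τ => monodromy q c w z (0, σ) (0, τ)

/-- The operator ℬ(z): auxiliary block (↑,↓) of the monodromy matrix. -/
def Bop (q c : ℂ) {N : ℕ} (w : Fin N → ℂ) (z : ℂ) :
    Matrix (Fin N → Fin 3) (Fin N → Fin 3) ℂ :=
  Matrix.of fun σ τ => monodromy q c w z (0, σ) (1, τ)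

/-- The operator 𝒟(z): auxiliary block (↓,↓) of the monodromy matrix. -/
def Dop (q c : ℂ) {N : ℕ} (w : Fin N → ℂ) (z : ℂ) :
    Matrix (Fin N → Fin 3) (Fin N → Fin 3) ℂ :=
  Matrix.of fun σ τ => monodromy q c w z (1, σ) (1, τ)

/-- Bethe reference state `|∧⟩ = |⇑…⇑⟩`. -/
def vac (N : ℕ) : (Fin N → Fin 3) → ℂ := fun σ => if σ = fun _ => 0 then 1 else 0

/-- Bethe vector `|Ψ(w₁,…,w_N)⟩ = ℬ(w₁)⋯ℬ(w_N)|∧⟩`. -/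
def bethe (q c : ℂ) {N : ℕ} (w : Fin N → ℂ) : (Fin N → Fin 3) → ℂ :=
  (((List.finRange N).map fun j => Bop q c w (w j)).prod).mulVec (vac N)

/-- Renormalised Bethe vector
`|Ψ̃(w₁,…,w_N)⟩ = c^{−N} (∏_{j<k} [q w_j/w_k])⁻¹ |Ψ(w₁,…,w_N)⟩`. -/
def betheTilde (q c : ℂ) {N : ℕ} (w : Fin N → ℂ) : (Fin N → Fin 3) → ℂ :=
  ((c ^ N)⁻¹ *
    (∏ pr ∈ Finset.univ.filter (fun pr : Fin N × Fin N => pr.1 < pr.2),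
      br (q * w pr.1 / w pr.2))⁻¹) • bethe q c w

/-! The monodromy matrix of the `2n`-site chain factorises, in auxiliary space, as the
monodromy matrix of the last `n` sites times that of the first `n` sites. `R^{(1,2)}` conserves
the charge in which `↑, ↓` count `0, 1` and `⇑, 0, ⇓` count `0, 1, 2`. Hence in an entry of
`ℬ(z)` whose output is `⇑` on each of the first `n` sites the intermediate auxiliary state is
`↓`, and from `(↓, ⇑…⇑)` the first-half monodromy matrix reaches only `(↓, ⇑…⇑)`, with weight
`∏_k [q⁻¹z/w_k]`. So such rows of `ℬ(z)` are supported on columns of the same kind, where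
`ℬ(z)` acts as `∏_k [q⁻¹z/w_k] ℬ'(z)`; this passes to products of `ℬ`-operators, and
`c^{2n} = ([q][q²])^n` gives the prefactor. -/

section Grading

variable {ι κ γ R : Type*} [CommSemiring R]

def PreservesGrading (g : ι → γ) (M : Matrix ι ι R) : Prop :=
  ∀ i j, M i j ≠ 0 → g i = g j

namespace PreservesGrading

variable {g : ι → γ} {M N : Matrix ι ι R}

theorem one [DecidableEq ι] : PreservesGrading g (1 : Matrix ι ι R) := by
  intro i j h
  by_contra hg
  exact h (one_apply_ne fun hij => hg (congrArg g hij))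

theorem mul [Fintype ι] (hM : PreservesGrading g M) (hN : PreservesGrading g N) :
    PreservesGrading g (M * N) := by
  intro i j h
  obtain ⟨k, -, hk⟩ := Finset.exists_ne_zero_of_sum_ne_zero h
  exact (hM i k (left_ne_zero_of_mul hk)).trans (hN k j (right_ne_zero_of_mul hk))

theorem list_prod [Fintype ι] [DecidableEq ι] {l : List (Matrix ι ι R)}
    (hl : ∀ M ∈ l, PreservesGrading g M) : PreservesGrading g l.prod :=
  List.prod_induction _ (fun _ _ => mul) one hl

end PreservesGrading

def RowsSupportedOnRange (f : κ → ι) (M : Matrix ι ι R) : Prop :=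
  ∀ k i, M (f k) i ≠ 0 → i ∈ Set.range f

variable [Fintype ι] [Fintype κ] {f : κ → ι}

theorem RowsSupportedOnRange.mul_submatrix (hf : f.Injective) {M : Matrix ι ι R}
    (hM : RowsSupportedOnRange f M) (N : Matrix ι ι R) :
    (M * N).submatrix f f = M.submatrix f f * N.submatrix f f := by
  ext k k'
  refine (Fintype.sum_of_injective f hf _ _ (fun i hi => ?_) fun _ => rfl).symm
  by_contra h
  exact hi (hM k i (left_ne_zero_of_mul h))

theorem submatrix_list_prod_of_rowsSupportedOnRange [DecidableEq ι] [DecidableEq κ]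
    (hf : f.Injective) {l : List (Matrix ι ι R)} (hl : ∀ M ∈ l, RowsSupportedOnRange f M) :
    l.prod.submatrix f f = (l.map fun M => M.submatrix f f).prod := by
  induction l with
  | nil => exact submatrix_one f hf
  | cons M l ih =>
    rw [List.prod_cons, (hl M List.mem_cons_self).mul_submatrix hf,
      ih fun M' hM' => hl M' (List.mem_cons_of_mem M hM')]
    rfl

end Grading

theorem List.prod_map_smul {ι S M : Type*} [CommMonoid S] [Monoid M] [MulAction S M]
    [IsScalarTower S M M] [SMulCommClass S M M] (l : List ι) (s : ι → S) (f : ι → M) :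
    (l.map fun i => s i • f i).prod = (l.map s).prod • (l.map f).prod := by
  induction l with
  | nil => simp
  | cons i l ih => simp only [List.map_cons, List.prod_cons, ih, smul_mul_smul_comm]

theorem List.finRange_add (m n : ℕ) :
    List.finRange (m + n) =
      (List.finRange m).map (Fin.castAdd n) ++ (List.finRange n).map (Fin.natAdd m) := by
  rw [← List.ofFn_id, List.ofFn_add, List.ofFn_eq_map, List.ofFn_eq_map]
  rfl

section Sites

variable {R A α : Type*} [CommSemiring R] [DecidableEq α] {N : ℕ}

def siteOp (X : Matrix (A × α) (A × α) R) (j : Fin N) :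
    Matrix (A × (Fin N → α)) (A × (Fin N → α)) R :=
  Matrix.of fun p p' =>
    X (p.1, p.2 j) (p'.1, p'.2 j) * if ∀ k, k ≠ j → p.2 k = p'.2 k then 1 else 0

theorem siteOp_ne_zero {X : Matrix (A × α) (A × α) R} {j : Fin N}
    {p p' : A × (Fin N → α)} (h : siteOp X j p p' ≠ 0) :
    X (p.1, p.2 j) (p'.1, p'.2 j) ≠ 0 ∧ ∀ k, k ≠ j → p.2 k = p'.2 k := by
  by_cases hk : ∀ k, k ≠ j → p.2 k = p'.2 k
  · exact ⟨fun h0 => h (by simp [siteOp, h0]), hk⟩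
  · exact absurd (by simp [siteOp, hk]) h

variable [Fintype A] [DecidableEq A] [Fintype α]

def siteProd (X : Fin N → Matrix (A × α) (A × α) R) (L : List (Fin N)) :
    Matrix (A × (Fin N → α)) (A × (Fin N → α)) R :=
  (L.map fun j => siteOp (X j) j).prod

theorem siteProd_cons (X : Fin N → Matrix (A × α) (A × α) R) (j : Fin N) (L : List (Fin N)) :
    siteProd X (j :: L) = siteOp (X j) j * siteProd X L := by
  simp [siteProd]

theorem siteProd_append (X : Fin N → Matrix (A × α) (A × α) R) (L₁ L₂ : List (Fin N)) :
    siteProd X (L₁ ++ L₂) = siteProd X L₁ * siteProd X L₂ := by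
  simp [siteProd]

theorem monodromy_eq_siteProd (q c : ℂ) (w : Fin N → ℂ) (z : ℂ) :
    monodromy q c w z = siteProd (fun j => R12 q c (q⁻¹ * z / w j)) (List.finRange N).reverse :=
  rfl

theorem siteProd_preservesGrading_apply (X : Fin N → Matrix (A × α) (A × α) R)
    {L : List (Fin N)} {k : Fin N} (hk : k ∉ L) :
    PreservesGrading (fun p : A × (Fin N → α) => p.2 k) (siteProd X L) :=
  PreservesGrading.list_prod <| by
    simp only [List.mem_map]
    rintro _ ⟨j, hj, rfl⟩ p p' h
    exact (siteOp_ne_zero h).2 k fun hkj => hk (hkj ▸ hj)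

theorem siteProd_preservesGrading_charge (wA : A → ℕ) (wα : α → ℕ)
    {X : Fin N → Matrix (A × α) (A × α) R}
    (hX : ∀ j, PreservesGrading (fun p : A × α => wA p.1 + wα p.2) (X j)) (L : List (Fin N)) :
    PreservesGrading (fun p : A × (Fin N → α) => wA p.1 + ∑ k, wα (p.2 k)) (siteProd X L) :=
  PreservesGrading.list_prod <| by
    simp only [List.mem_map]
    rintro _ ⟨j, -, rfl⟩ p p' h
    obtain ⟨hX', hoff⟩ := siteOp_ne_zero h
    have hrest : ∑ k ∈ Finset.univ.erase j, wα (p.2 k) = ∑ k ∈ Finset.univ.erase j, wα (p'.2 k) :=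
      Finset.sum_congr rfl fun k hk => by rw [hoff k (Finset.ne_of_mem_erase hk)]
    have hsite := hX j _ _ hX'
    simp only at hsite ⊢
    rw [← Finset.add_sum_erase _ _ (Finset.mem_univ j),
      ← Finset.add_sum_erase _ (fun k => wα (p'.2 k)) (Finset.mem_univ j), hrest]
    omega

end Sites

section Embedding

variable {R A α β : Type*} {m N : ℕ} (e : Fin m ⊕ β ≃ Fin N)

def splitConfig : (Fin N → α) ≃ (Fin m → α) × (β → α) :=
  (e.arrowCongr (Equiv.refl α)).symm.trans (Equiv.sumArrowEquivProdArrow _ _ α)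

@[simp] theorem splitConfig_apply (σ : Fin N → α) :
    splitConfig e σ = (fun i => σ (e (.inl i)), fun b => σ (e (.inr b))) := rfl

@[simp] theorem splitConfig_symm_apply_inl (u : Fin m → α) (v : β → α) (i : Fin m) :
    (splitConfig e).symm (u, v) (e (.inl i)) = u i := by
  simp [splitConfig]

@[simp] theorem splitConfig_symm_apply_inr (u : Fin m → α) (v : β → α) (b : β) :
    (splitConfig e).symm (u, v) (e (.inr b)) = v b := by
  simp [splitConfig]

variable [CommSemiring R] [DecidableEq α] [Fintype β]

theorem siteOp_apply_inl (X : Matrix (A × α) (A × α) R) (j : Fin m) (a a' : A)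
    (σ σ' : Fin N → α) :
    siteOp X (e (.inl j)) (a, σ) (a', σ') =
      siteOp X j (a, fun i => σ (e (.inl i))) (a', fun i => σ' (e (.inl i))) *
        if (fun b => σ (e (.inr b))) = (fun b => σ' (e (.inr b))) then 1 else 0 := by
  have hcond : (∀ k, k ≠ e (.inl j) → σ k = σ' k) ↔
      (∀ i, i ≠ j → σ (e (.inl i)) = σ' (e (.inl i))) ∧
        (fun b => σ (e (.inr b))) = (fun b => σ' (e (.inr b))) := by
    rw [← e.forall_congr_right, Sum.forall, funext_iff]
    simp [e.injective.ne_iff]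
  simp only [siteOp, Matrix.of_apply]
  rw [mul_assoc, ite_zero_mul_ite_zero, one_mul, if_congr hcond rfl rfl]

variable [Fintype A] [DecidableEq A] [Fintype α] [DecidableEq β]

theorem siteProd_map_inl (X : Fin N → Matrix (A × α) (A × α) R) (L : List (Fin m)) (a a' : A)
    (σ σ' : Fin N → α) :
    siteProd X (L.map fun j => e (.inl j)) (a, σ) (a', σ') =
      siteProd (fun j => X (e (.inl j))) L (a, fun i => σ (e (.inl i)))
          (a', fun i => σ' (e (.inl i))) *
        if (fun b => σ (e (.inr b))) = (fun b => σ' (e (.inr b))) then 1 else 0 := by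
  induction L generalizing a σ with
  | nil =>
    have hσ : σ = σ' ↔ (fun i => σ (e (.inl i))) = (fun i => σ' (e (.inl i))) ∧
        (fun b => σ (e (.inr b))) = (fun b => σ' (e (.inr b))) := by
      rw [← (splitConfig e).injective.eq_iff, splitConfig_apply, splitConfig_apply, Prod.ext_iff]
    simp only [siteProd, List.map_nil, List.prod_nil, Matrix.one_apply, Prod.mk.injEq,
      ite_zero_mul_ite_zero, one_mul, hσ, and_assoc]
  | cons j L ih =>
    rw [List.map_cons, siteProd_cons, siteProd_cons, Matrix.mul_apply, Matrix.mul_apply,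
      ← (Equiv.prodCongr (Equiv.refl A) (splitConfig e).symm).sum_comp]
    simp only [Fintype.sum_prod_type, Equiv.prodCongr_apply, Equiv.coe_refl, Prod.map, id,
      siteOp_apply_inl, ih, splitConfig_symm_apply_inl, splitConfig_symm_apply_inr,
      mul_ite, ite_mul, mul_one, mul_zero, zero_mul, Finset.sum_ite_eq', Finset.mem_univ,
      if_true, Finset.sum_ite_irrel, Finset.sum_const_zero]

end Embedding

theorem siteProd_finRange_add_reverse_apply {R A α : Type*} [CommSemiring R] [Fintype A]
    [DecidableEq A] [Fintype α] [DecidableEq α] {m n : ℕ}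
    (X : Fin (m + n) → Matrix (A × α) (A × α) R) (a a' : A) (σ σ' : Fin (m + n) → α) :
    siteProd X (List.finRange (m + n)).reverse (a, σ) (a', σ') =
      ∑ b : A,
        siteProd (fun k => X (Fin.natAdd m k)) (List.finRange n).reverse
            (a, fun i => σ (Fin.natAdd m i)) (b, fun i => σ' (Fin.natAdd m i)) *
          siteProd (fun k => X (Fin.castAdd n k)) (List.finRange m).reverse
            (b, fun i => σ (Fin.castAdd n i)) (a', fun i => σ' (Fin.castAdd n i)) := by
  have hcast := siteProd_map_inl (finSumFinEquiv (m := m) (n := n)) X (List.finRange m).reverse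
  have hnat := siteProd_map_inl ((Equiv.sumComm (Fin n) (Fin m)).trans finSumFinEquiv) X
    (List.finRange n).reverse
  simp only [finSumFinEquiv_apply_left, finSumFinEquiv_apply_right, Equiv.trans_apply,
    Equiv.sumComm_apply, Sum.swap_inl, Sum.swap_inr] at hcast hnat
  rw [List.finRange_add, List.reverse_append, ← List.map_reverse, ← List.map_reverse,
    siteProd_append, Matrix.mul_apply,
    ← (Equiv.prodCongr (Equiv.refl A) (Fin.appendEquiv m n)).sum_comp]
  simp only [Fintype.sum_prod_type, Equiv.prodCongr_apply, Equiv.coe_refl, Prod.map, id, hcast,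
    hnat, Fin.appendEquiv_apply, Fin.append_left, Fin.append_right, mul_ite, mul_one, mul_zero,
    ite_mul, zero_mul, Finset.sum_ite_eq', Finset.sum_ite_eq, Finset.mem_univ, if_true]

section Monodromy

variable (q c : ℂ) {N : ℕ}

theorem R12_preservesGrading (z : ℂ) :
    PreservesGrading (fun p : Fin 2 × Fin 3 => (p.1 : ℕ) + (p.2 : ℕ)) (R12 q c z) := by
  intro p p' h
  by_contra hne
  apply h
  fin_cases p <;> fin_cases p' <;> simp [R12] at hne ⊢

def charge (p : Fin 2 × (Fin N → Fin 3)) : ℕ := p.1 + ∑ k, (p.2 k : ℕ)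

theorem monodromy_preservesGrading_charge (w : Fin N → ℂ) (z : ℂ) :
    PreservesGrading charge (monodromy q c w z) :=
  siteProd_preservesGrading_charge _ _ (fun _ => R12_preservesGrading q c _) _

theorem siteProd_R12_down_vac_down (zf : Fin N → ℂ) {L : List (Fin N)} (hL : L.Nodup) :
    siteProd (fun j => R12 q c (zf j)) L (1, fun _ => 0) (1, fun _ => 0) =
      (L.map fun j => br (zf j)).prod := by
  induction L with
  | nil => simp [siteProd]
  | cons j L ih =>
    obtain ⟨hj, hL⟩ := List.nodup_cons.mp hL
    rw [siteProd_cons, Matrix.mul_apply, Finset.sum_eq_single (1, fun _ => 0), ih hL,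
      List.map_cons, List.prod_cons]
    · simp [siteOp, R12]
    -- the only other transition from `(↓, ⇑)` at site `j` leaves that site in state `0`,
    -- which the sites of `L` cannot undo
    · rintro ⟨ε, ρ⟩ - hx
      by_contra h
      obtain ⟨hR, hoff⟩ := siteOp_ne_zero (left_ne_zero_of_mul h)
      have hρj : ρ j = 0 :=
        siteProd_preservesGrading_apply _ hj _ _ (right_ne_zero_of_mul h)
      obtain rfl : ρ = fun _ => 0 := funext fun k => by
        by_cases hk : k = j
        · rw [hk, hρj]
        · exact (hoff k hk).symm
      fin_cases ε
      · exact hR (by simp [R12])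
      · exact hx rfl
    · simp

theorem monodromy_down_vac_down (w : Fin N → ℂ) (z : ℂ) (τ : Fin N → Fin 3) :
    monodromy q c w z (1, fun _ => 0) (1, τ) =
      if τ = (fun _ => 0) then ∏ k, br (q⁻¹ * z / w k) else 0 := by
  split_ifs with hτ
  · rw [hτ, monodromy_eq_siteProd,
      siteProd_R12_down_vac_down _ _ _ (List.nodup_reverse.mpr (List.nodup_finRange N)),
      List.map_reverse, List.prod_reverse, Fin.prod_univ_def]
  · by_contra h
    have hcharge := monodromy_preservesGrading_charge q c w z _ _ h
    simp [charge] at hcharge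
    exact hτ (funext hcharge)

theorem monodromy_up_vac_down (w : Fin N → ℂ) (z : ℂ) (τ : Fin N → Fin 3) :
    monodromy q c w z (0, fun _ => 0) (1, τ) = 0 := by
  by_contra h
  have hcharge := monodromy_preservesGrading_charge q c w z _ _ h
  simp [charge] at hcharge
  omega

end Monodromy

section Reduction

variable (q c : ℂ) {m n : ℕ}

theorem monodromy_apply_of_add (w : Fin (m + n) → ℂ) (z : ℂ) (a a' : Fin 2)
    (σ σ' : Fin (m + n) → Fin 3) :
    monodromy q c w z (a, σ) (a', σ') =
      ∑ b : Fin 2,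
        monodromy q c (fun k => w (Fin.natAdd m k)) z
            (a, fun i => σ (Fin.natAdd m i)) (b, fun i => σ' (Fin.natAdd m i)) *
          monodromy q c (fun k => w (Fin.castAdd n k)) z
            (b, fun i => σ (Fin.castAdd n i)) (a', fun i => σ' (Fin.castAdd n i)) :=
  siteProd_finRange_add_reverse_apply _ _ _ _ _

theorem Bop_append_zero_apply (w : Fin (m + n) → ℂ) (z : ℂ) (τ : Fin n → Fin 3)
    (χ : Fin (m + n) → Fin 3) :
    Bop q c w z (Fin.append (fun _ => 0) τ) χ =
      if (fun i => χ (Fin.castAdd n i)) = (fun _ => 0) then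
        (∏ k, br (q⁻¹ * z / w (Fin.castAdd n k))) *
          Bop q c (fun k => w (Fin.natAdd m k)) z τ (fun i => χ (Fin.natAdd m i))
      else 0 := by
  simp only [Bop, Matrix.of_apply, monodromy_apply_of_add, Fin.append_left, Fin.append_right,
    Fin.sum_univ_two, monodromy_up_vac_down, monodromy_down_vac_down]
  split_ifs <;> ring

variable {q c}

theorem Bop_rowsSupportedOnRange_append_zero (w : Fin (m + n) → ℂ) (z : ℂ) :
    RowsSupportedOnRange (Fin.append (fun _ : Fin m => (0 : Fin 3)) : (Fin n → Fin 3) → _)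
      (Bop q c w z) := by
  intro τ χ h
  rw [Bop_append_zero_apply] at h
  split_ifs at h with hχ
  · exact ⟨fun i => χ (Fin.natAdd m i), by rw [← hχ]; exact Fin.append_castAdd_natAdd⟩
  · exact absurd rfl h

theorem Bop_submatrix_append_zero (w : Fin (m + n) → ℂ) (z : ℂ) :
    (Bop q c w z).submatrix (Fin.append fun _ => 0) (Fin.append fun _ => 0) =
      (∏ k, br (q⁻¹ * z / w (Fin.castAdd n k))) • Bop q c (fun k => w (Fin.natAdd m k)) z := by
  ext τ τ'
  simp [Bop_append_zero_apply, Fin.append_left, Fin.append_right]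

variable (q c)

theorem list_prod_Bop_submatrix_append_zero {ι : Type*} (l : List ι) (g : ι → ℂ)
    (w : Fin (m + n) → ℂ) :
    ((l.map fun i => Bop q c w (g i)).prod).submatrix (Fin.append fun _ => 0)
        (Fin.append fun _ => 0) =
      (l.map fun i => ∏ k, br (q⁻¹ * g i / w (Fin.castAdd n k))).prod •
        (l.map fun i => Bop q c (fun k => w (Fin.natAdd m k)) (g i)).prod := by
  have happend : (Fin.append (fun _ : Fin m => (0 : Fin 3)) : (Fin n → Fin 3) → _).Injective :=
    fun τ τ' h => funext fun i => by simpa using congrFun h (Fin.natAdd m i)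
  have hsupp : ∀ M ∈ l.map fun i => Bop q c w (g i),
      RowsSupportedOnRange (Fin.append fun _ => 0) M := by
    simp only [List.mem_map]
    rintro _ ⟨i, -, rfl⟩
    exact Bop_rowsSupportedOnRange_append_zero w (g i)
  rw [submatrix_list_prod_of_rowsSupportedOnRange happend hsupp, List.map_map]
  simp only [Function.comp_def, Bop_submatrix_append_zero]
  exact List.prod_map_smul l _ _

end Reduction

theorem mulVec_vac_apply {N : ℕ} (M : Matrix (Fin N → Fin 3) (Fin N → Fin 3) ℂ)
    (σ : Fin N → Fin 3) : M.mulVec (vac N) σ = M σ (fun _ => 0) := by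
  simp [Matrix.mulVec, dotProduct, vac]

theorem stmt17_general (q c : ℂ) (hc : c^2 = br q * br (q^2))
    (n : ℕ) (w : Fin (n+n) → ℂ) :
    betheTilde q c w (fun i => if (i : ℕ) < n then 0 else 2) =
      ((∏ j : Fin (n+n), ∏ k : Fin n, br (q⁻¹ * w j / w (Fin.castAdd n k))) /
          ((br q * br (q^2))^n *
            ∏ pr ∈ Finset.univ.filter (fun pr : Fin (n+n) × Fin (n+n) => pr.1 < pr.2),
              br (q * w pr.1 / w pr.2))) *
        ((((List.finRange (n+n)).map fun j =>
            Bop q c (fun k : Fin n => w (Fin.natAdd n k)) (w j)).prod).mulVec (vac n))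
          (fun _ => 2) := by
  have hσ : (fun i : Fin (n + n) => if (i : ℕ) < n then (0 : Fin 3) else 2) =
      Fin.append (fun _ => 0) (fun _ => 2) := by
    funext i
    induction i using Fin.addCases with
    | left i => simp
    | right i => rw [Fin.append_right]; simp
  have hvac : (fun _ : Fin (n + n) => (0 : Fin 3)) = Fin.append (fun _ => 0) (fun _ => 0) :=
    Fin.append_castAdd_natAdd.symm
  have hreduce := Matrix.ext_iff.mpr
    (list_prod_Bop_submatrix_append_zero q c (List.finRange (n + n)) w w) (fun _ => 2) (fun _ => 0)
  simp only [Matrix.submatrix_apply, Matrix.smul_apply, smul_eq_mul, ← Fin.prod_univ_def]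
    at hreduce
  have hcpow : c ^ (n + n) = (br q * br (q ^ 2)) ^ n := by rw [← two_mul, pow_mul, hc]
  rw [betheTilde, Pi.smul_apply, smul_eq_mul, bethe, mulVec_vac_apply, mulVec_vac_apply, hσ, hvac,
    hreduce, hcpow]
  ring

/-- Size-reduction formula for the simple component `⟨⇑…⇑⇓…⇓|Ψ̃(w₁,…,w_{2n})⟩`:
it reduces to a matrix element of a product of ℬ-operators of the n-site chain with
inhomogeneities `w_{n+1},…,w_{2n}`. -/
theorem stmt17 (q c : ℂ) (hq : q ≠ 0) (hq4 : q^4 ≠ 1) (hc : c^2 = br q * br (q^2))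
    (n : ℕ) (hn : 1 ≤ n) (w : Fin (n+n) → ℂ) (hw : ∀ j, w j ≠ 0)
    (hgen : ∀ j k : Fin (n+n), j < k → q * w j / w k ≠ 1 ∧ q * w j / w k ≠ -1) :
    betheTilde q c w (fun i => if (i : ℕ) < n then 0 else 2) =
      ((∏ j : Fin (n+n), ∏ k : Fin n, br (q⁻¹ * w j / w (Fin.castAdd n k))) /
          ((br q * br (q^2))^n *
            ∏ pr ∈ Finset.univ.filter (fun pr : Fin (n+n) × Fin (n+n) => pr.1 < pr.2),
              br (q * w pr.1 / w pr.2))) *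
        ((((List.finRange (n+n)).map fun j =>
            Bop q c (fun k : Fin n => w (Fin.natAdd n k)) (w j)).prod).mulVec (vac n))
          (fun _ => 2) :=
  stmt17_general q c hc n w

end
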